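/- arXiv:1706.03705 — 3 statements merged into one kernel-verified Lean document; each statement's English description precedes it below -/
import Mathlib

section
/- Homogeneous separation: let Q be a nonempty convex set and K a closed convex cone with nonempty interior in a finite-dimensional inner product space. Then Q intersects the interior of K if and only if there is no nonzero v ∈ K* with ⟨v,x⟩ ≤ 0 for all x ∈ Q. Moreover, for any such v, the set Q ∩ K is contained in the face v⊥ ∩ K. -/
open scoped RealInnerProductSpace
open Filter Topology

/-!
If `Q` misses `interior K`, Hahn–Banach gives a nonzero functional `f` with `f ≤ u` on `K` and
`u ≤ f` on `Q`; being bounded above on the cone `K`, `f` is nonpositive there, and `0 ∈ K` gives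
`u ≥ 0`, so the Riesz representative of `-f` is the required `v`. Conversely, if
`x ∈ Q ∩ interior K` and `v ∈ K*` with `⟪v, x⟫ ≤ 0`, then `x - t • v ∈ K` for small `t > 0`
yields `t ‖v‖² ≤ ⟪v, x⟫ ≤ 0`, so `v = 0`.
-/

theorem LinearMap.nonpos_of_le_on_cone {E : Type*} [AddCommGroup E] [Module ℝ E]
    (f : E →ₗ[ℝ] ℝ) {K : Set E} (hcone : ∀ x ∈ K, ∀ t : ℝ, 0 ≤ t → t • x ∈ K) {u : ℝ}
    (hf : ∀ x ∈ K, f x ≤ u) {x : E} (hx : x ∈ K) : f x ≤ 0 := by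
  by_contra! hpos
  have h := hf _ (hcone x hx ((|u| + 1) / f x) (by positivity))
  rw [map_smul, smul_eq_mul, div_mul_cancel₀ _ hpos.ne'] at h
  linarith [le_abs_self u]

section InnerProductSpace

variable {E : Type*} [NormedAddCommGroup E] [InnerProductSpace ℝ E]

theorem eq_zero_of_inner_nonpos_of_mem_interior {K : Set E} {v x : E}
    (hKv : ∀ y ∈ K, 0 ≤ ⟪y, v⟫) (hx : x ∈ interior K) (hvx : ⟪v, x⟫ ≤ 0) : v = 0 := by
  have hlim : Tendsto (fun t : ℝ => x - t • v) (𝓝[>] 0) (𝓝 x) := by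
    have : Continuous (fun t : ℝ => x - t • v) := by fun_prop
    simpa using this.tendsto' 0 x (by simp) |>.mono_left nhdsWithin_le_nhds
  obtain ⟨t, hxt, ht⟩ :=
    ((hlim.eventually (mem_interior_iff_mem_nhds.1 hx)).and self_mem_nhdsWithin).exists
  have h := hKv _ hxt
  rw [inner_sub_left, real_inner_smul_left, real_inner_comm, real_inner_self_eq_norm_sq] at h
  have : ‖v‖ ^ 2 ≤ 0 := by nlinarith [show (0 : ℝ) < t from ht]
  simpa using this

theorem exists_inner_separating_of_disjoint_interior [CompleteSpace E] {Q K : Set E}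
    (hQne : Q.Nonempty) (hQ : Convex ℝ Q) (hK : Convex ℝ K)
    (hcone : ∀ x ∈ K, ∀ t : ℝ, 0 ≤ t → t • x ∈ K) (hint : (interior K).Nonempty)
    (hdisj : Disjoint (interior K) Q) :
    ∃ v : E, v ≠ 0 ∧ (∀ x ∈ K, 0 ≤ ⟪x, v⟫) ∧ ∀ x ∈ Q, ⟪v, x⟫ ≤ 0 := by
  obtain ⟨f, u, hf0, hfK, hfQ⟩ := geometric_hahn_banach_of_nonempty_interior hK hQ hdisj hint hQne
  have hf_nonpos : ∀ x ∈ K, f x ≤ 0 := fun x hx =>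
    f.toLinearMap.nonpos_of_le_on_cone hcone hfK hx
  have hu : 0 ≤ u := by
    obtain ⟨x₀, hx₀⟩ := hint
    simpa using hfK 0 (by simpa using hcone x₀ (interior_subset hx₀) 0 le_rfl)
  have hv : ∀ x, ⟪(InnerProductSpace.toDual ℝ E).symm (-f), x⟫ = -f x := fun x =>
    InnerProductSpace.toDual_symm_apply
  refine ⟨(InnerProductSpace.toDual ℝ E).symm (-f), by simpa using hf0, fun x hx => ?_,
    fun x hx => ?_⟩
  · rw [real_inner_comm, hv]
    linarith [hf_nonpos x hx]
  · rw [hv]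
    linarith [hfQ x hx]

end InnerProductSpace

theorem homogeneous_separation_general {E : Type*} [NormedAddCommGroup E] [InnerProductSpace ℝ E]
    [FiniteDimensional ℝ E] (Q K : Set E) (hQne : Q.Nonempty) (hQconv : Convex ℝ Q)
    (hconv : Convex ℝ K)
    (hcone : ∀ x ∈ K, ∀ t : ℝ, 0 ≤ t → t • x ∈ K) (hint : (interior K).Nonempty) :
    ((Q ∩ interior K).Nonempty ↔
      ¬ ∃ v : E, v ≠ 0 ∧ (∀ x ∈ K, 0 ≤ ⟪x, v⟫) ∧ (∀ x ∈ Q, ⟪v, x⟫ ≤ 0)) ∧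
    (∀ v : E, v ≠ 0 → (∀ x ∈ K, 0 ≤ ⟪x, v⟫) → (∀ x ∈ Q, ⟪v, x⟫ ≤ 0) →
      Q ∩ K ⊆ {x : E | ⟪v, x⟫ = 0} ∩ K) := by
  refine ⟨⟨?_, fun hno => ?_⟩, fun v _ hKv hQv x ⟨hxQ, hxK⟩ => ?_⟩
  · rintro ⟨x, hxQ, hxK⟩ ⟨v, hv, hKv, hQv⟩
    exact hv (eq_zero_of_inner_nonpos_of_mem_interior hKv hxK (hQv x hxQ))
  · by_contra hempty
    exact hno (exists_inner_separating_of_disjoint_interior hQne hQconv hconv hcone hint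
      (Set.disjoint_left.2 fun x hxK hxQ => hempty ⟨x, hxQ, hxK⟩))
  · exact ⟨le_antisymm (hQv x hxQ) (real_inner_comm x v ▸ hKv x hxK), hxK⟩

theorem homogeneous_separation {E : Type*} [NormedAddCommGroup E] [InnerProductSpace ℝ E]
    [FiniteDimensional ℝ E] (Q K : Set E) (hQne : Q.Nonempty) (hQconv : Convex ℝ Q)
    (hc : IsClosed K) (hconv : Convex ℝ K)
    (hcone : ∀ x ∈ K, ∀ t : ℝ, 0 ≤ t → t • x ∈ K) (hint : (interior K).Nonempty) :
    ((Q ∩ interior K).Nonempty ↔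
      ¬ ∃ v : E, v ≠ 0 ∧ (∀ x ∈ K, 0 ≤ ⟪x, v⟫) ∧ (∀ x ∈ Q, ⟪v, x⟫ ≤ 0)) ∧
    (∀ v : E, v ≠ 0 → (∀ x ∈ K, 0 ≤ ⟪x, v⟫) → (∀ x ∈ Q, ⟪v, x⟫ ≤ 0) →
      Q ∩ K ⊆ {x : E | ⟪v, x⟫ = 0} ∩ K) :=
  homogeneous_separation_general Q K hQne hQconv hconv hcone hint
end

section
/- Theorem of the alternative for the primal: let K be a closed convex cone with nonempty interior, A : E → F linear, b ∈ range(A). Exactly one of the following holds: (1) there exists x in the interior of K with Ax = b; (2) there exists y with A*y ∈ K*, A*y ≠ 0, and ⟨b,y⟩ ≤ 0. -/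
/-!
If `b = A x₀` is not hit by `A` from the open convex set `interior K`, a continuous functional
`g` separates `interior K` from the affine subspace `x₀ + ker A`. Since `K` is a cone, `g` is
nonnegative on `K` (which lies in the closure of its interior); being bounded on
`x₀ + ker A`, it vanishes on `ker A`, so it lies in `(ker A)ᗮ = range A*`, i.e. `g = ⟪·, A* y⟫`.
Conversely, a nonzero element of `K*` is strictly positive on `interior K`, which rules out both
alternatives holding at once.
-/

open Filter Topology
open scoped RealInnerProductSpace

section OrderedField

variable {𝕜 M : Type*} [Field 𝕜] [LinearOrder 𝕜] [IsStrictOrderedRing 𝕜]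
  [AddCommGroup M] [Module 𝕜 M]

theorem LinearMap.map_nonpos_of_le_of_smul_mem {f : M →ₗ[𝕜] 𝕜} {S : Set M} {c : 𝕜}
    (hS : ∀ x ∈ S, ∀ t : 𝕜, 0 ≤ t → t • x ∈ S) (hf : ∀ x ∈ S, f x ≤ c) {x : M} (hx : x ∈ S) :
    f x ≤ 0 := by
  by_contra! hpos
  have := hf _ (hS x hx ((c + 1) / f x) (div_nonneg (by linarith [hf x hx]) hpos.le))
  rw [map_smul, smul_eq_mul, div_mul_cancel₀ _ hpos.ne'] at this
  linarith

theorem LinearMap.map_eq_zero_of_le_of_mem {f : M →ₗ[𝕜] 𝕜} {V : Submodule 𝕜 M} {c : 𝕜}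
    (hf : ∀ v ∈ V, c ≤ f v) {v : M} (hv : v ∈ V) : f v = 0 := by
  by_contra hne
  have := hf _ (V.smul_mem ((c - 1) / f v) hv)
  rw [map_smul, smul_eq_mul, div_mul_cancel₀ _ hne] at this
  linarith

end OrderedField

theorem inner_pos_of_mem_interior {E : Type*} [NormedAddCommGroup E] [InnerProductSpace ℝ E]
    {K : Set E} {v x : E} (hv : ∀ z ∈ K, 0 ≤ ⟪z, v⟫) (hv0 : v ≠ 0) (hx : x ∈ interior K) :
    0 < ⟪x, v⟫ := by
  have hlim : Tendsto (fun t : ℝ => x - t • v) (𝓝 0) (𝓝 x) :=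
    Continuous.tendsto' (by fun_prop) 0 x (by simp)
  have hev : ∀ᶠ t in 𝓝[>] (0 : ℝ), x - t • v ∈ K :=
    (hlim.eventually (mem_interior_iff_mem_nhds.1 hx)).filter_mono nhdsWithin_le_nhds
  obtain ⟨t, htK, ht⟩ := (hev.and self_mem_nhdsWithin).exists
  have hinner := hv _ htK
  rw [inner_sub_left, real_inner_smul_left] at hinner
  linarith [mul_pos (Set.mem_Ioi.1 ht) (real_inner_self_pos.2 hv0)]

theorem exists_dual_nonneg_on_cone_nonpos_on_affineSubspace {E : Type*}
    [NormedAddCommGroup E] [NormedSpace ℝ E] {K : Set E} (hconv : Convex ℝ K)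
    (hcone : ∀ x ∈ K, ∀ t : ℝ, 0 ≤ t → t • x ∈ K) (hint : (interior K).Nonempty)
    {s : AffineSubspace ℝ E} (hs : (s : Set E).Nonempty) (hdisj : Disjoint (interior K) s) :
    ∃ g : StrongDual ℝ E, g ≠ 0 ∧ (∀ x ∈ K, 0 ≤ g x) ∧ (∀ v ∈ s.direction, g v = 0) ∧
      ∀ p ∈ s, g p ≤ 0 := by
  obtain ⟨f, c, hfK, hfs⟩ :=
    geometric_hahn_banach_open hconv.interior isOpen_interior s.convex hdisj
  have hle : ∀ x ∈ K, f x ≤ c := fun x hx =>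
    closure_minimal (fun y hy => (hfK y hy).le) (isClosed_le f.continuous continuous_const)
      (hconv.closure_interior_eq_closure_of_nonempty_interior hint ▸ subset_closure hx)
  obtain ⟨e, he⟩ := hint
  obtain ⟨p, hp⟩ := hs
  have hc : 0 ≤ c := by simpa using hle 0 (by simpa using hcone e (interior_subset he) 0 le_rfl)
  refine ⟨-f, ?_, fun x hx => ?_, fun v hv => ?_, fun q hq => ?_⟩
  · rw [neg_ne_zero]
    rintro rfl
    simpa using (hfK e he).trans_le (hfs p hp)
  · simpa using f.toLinearMap.map_nonpos_of_le_of_smul_mem hcone hle hx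
  · have hbound : ∀ w ∈ s.direction, c - f p ≤ f w := fun w hw => by
      have := hfs _ (s.vadd_mem_of_mem_direction hw hp)
      rw [vadd_eq_add, map_add] at this
      linarith
    simpa using f.toLinearMap.map_eq_zero_of_le_of_mem hbound hv
  · simpa using hc.trans (hfs q hq)

theorem LinearMap.exists_inner_adjoint_eq_of_ker {E F : Type*}
    [NormedAddCommGroup E] [InnerProductSpace ℝ E] [NormedAddCommGroup F] [InnerProductSpace ℝ F]
    [FiniteDimensional ℝ E] [FiniteDimensional ℝ F] (A : E →ₗ[ℝ] F) (g : StrongDual ℝ E)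
    (hg : ∀ k ∈ LinearMap.ker A, g k = 0) : ∃ y : F, ∀ x, ⟪x, LinearMap.adjoint A y⟫ = g x := by
  set u := (InnerProductSpace.toDual ℝ E).symm g
  have hu : u ∈ (LinearMap.ker A)ᗮ := fun k hk => by
    rw [real_inner_comm, InnerProductSpace.toDual_symm_apply, hg k hk]
  rw [LinearMap.orthogonal_ker] at hu
  obtain ⟨y, hy⟩ := hu
  exact ⟨y, fun x => by rw [hy, real_inner_comm, InnerProductSpace.toDual_symm_apply]⟩

theorem primal_theorem_of_alternative_general {E F : Type*}
    [NormedAddCommGroup E] [InnerProductSpace ℝ E]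
    [NormedAddCommGroup F] [InnerProductSpace ℝ F]
    [FiniteDimensional ℝ E] [FiniteDimensional ℝ F]
    (A : E →ₗ[ℝ] F) (K : Set E) (hconv : Convex ℝ K)
    (hcone : ∀ x ∈ K, ∀ t : ℝ, 0 ≤ t → t • x ∈ K) (hint : (interior K).Nonempty)
    (b : F) (hb : b ∈ LinearMap.range A) :
    Xor' (∃ x ∈ interior K, A x = b)
      (∃ y : F, (∀ x ∈ K, 0 ≤ ⟪x, LinearMap.adjoint A y⟫) ∧
        LinearMap.adjoint A y ≠ 0 ∧ ⟪b, y⟫ ≤ 0) := by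
  obtain ⟨x₀, rfl⟩ := hb
  refine xor_iff_not_iff'.2 ⟨fun hno => ?_, ?_⟩
  · set s := AffineSubspace.mk' x₀ (LinearMap.ker A)
    have hdisj : Disjoint (interior K) s := Set.disjoint_left.2 fun x hx hxs =>
      hno ⟨x, hx, by simpa [s, sub_eq_zero] using hxs⟩
    obtain ⟨g, hg0, hgK, hgker, hgs⟩ := exists_dual_nonneg_on_cone_nonpos_on_affineSubspace
      hconv hcone hint ⟨x₀, AffineSubspace.self_mem_mk' _ _⟩ hdisj
    rw [AffineSubspace.direction_mk'] at hgker
    obtain ⟨y, hy⟩ := A.exists_inner_adjoint_eq_of_ker g hgker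
    refine ⟨y, fun x hx => hy x ▸ hgK x hx, fun h => hg0 ?_, ?_⟩
    · ext x
      simp [← hy x, h]
    · rw [← LinearMap.adjoint_inner_right, hy]
      exact hgs x₀ (AffineSubspace.self_mem_mk' _ _)
  · rintro ⟨y, hyK, hy0, hby⟩ ⟨x, hx, hAx⟩
    exact (inner_pos_of_mem_interior hyK hy0 hx).not_ge
      (by rwa [LinearMap.adjoint_inner_right, hAx])

theorem primal_theorem_of_alternative {E F : Type*}
    [NormedAddCommGroup E] [InnerProductSpace ℝ E]
    [NormedAddCommGroup F] [InnerProductSpace ℝ F]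
    [FiniteDimensional ℝ E] [FiniteDimensional ℝ F]
    (A : E →ₗ[ℝ] F) (K : Set E) (hc : IsClosed K) (hconv : Convex ℝ K)
    (hcone : ∀ x ∈ K, ∀ t : ℝ, 0 ≤ t → t • x ∈ K) (hint : (interior K).Nonempty)
    (b : F) (hb : b ∈ LinearMap.range A) :
    Xor' (∃ x ∈ interior K, A x = b)
      (∃ y : F, (∀ x ∈ K, 0 ≤ ⟪x, LinearMap.adjoint A y⟫) ∧
        LinearMap.adjoint A y ≠ 0 ∧ ⟪b, y⟫ ≤ 0) :=
  primal_theorem_of_alternative_general A K hconv hcone hint b hb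
end

section
/- If the primal feasible set {x ∈ K : Ax = b} is nonempty and y satisfies A*y ∈ K*, A*y ≠ 0, and ⟨b,y⟩ ≤ 0, then in fact ⟨b,y⟩ = 0, and every primal feasible x lies in the face (A*y)⊥ ∩ K. -/
open scoped RealInnerProductSpace

theorem auxiliary_certificate_gives_face_general {E F : Type*}
    [NormedAddCommGroup E] [InnerProductSpace ℝ E]
    [NormedAddCommGroup F] [InnerProductSpace ℝ F]
    [FiniteDimensional ℝ E] [FiniteDimensional ℝ F]
    (A : E →ₗ[ℝ] F) (K : Set E)
    (b : F) (hfeas : ∃ x ∈ K, A x = b) (y : F)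
    (hdual : ∀ x ∈ K, 0 ≤ ⟪x, LinearMap.adjoint A y⟫)
    (hby : ⟪b, y⟫ ≤ 0) :
    ⟪b, y⟫ = 0 ∧ ∀ x ∈ K, A x = b → x ∈ {z : E | ⟪LinearMap.adjoint A y, z⟫ = 0} ∩ K := by
  have hval : ∀ x, A x = b → ⟪x, LinearMap.adjoint A y⟫ = ⟪b, y⟫ := fun x hx => by
    rw [LinearMap.adjoint_inner_right, hx]
  obtain ⟨x₀, hx₀K, hx₀⟩ := hfeas
  have hb : ⟪b, y⟫ = 0 := le_antisymm hby (hval x₀ hx₀ ▸ hdual x₀ hx₀K)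
  refine ⟨hb, fun x hxK hx => ⟨?_, hxK⟩⟩
  rw [Set.mem_ofPred_eq, real_inner_comm, hval x hx, hb]

theorem auxiliary_certificate_gives_face {E F : Type*}
    [NormedAddCommGroup E] [InnerProductSpace ℝ E]
    [NormedAddCommGroup F] [InnerProductSpace ℝ F]
    [FiniteDimensional ℝ E] [FiniteDimensional ℝ F]
    (A : E →ₗ[ℝ] F) (K : Set E) (hc : IsClosed K) (hconv : Convex ℝ K)
    (hcone : ∀ x ∈ K, ∀ t : ℝ, 0 ≤ t → t • x ∈ K)
    (b : F) (hfeas : ∃ x ∈ K, A x = b) (y : F)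
    (hdual : ∀ x ∈ K, 0 ≤ ⟪x, LinearMap.adjoint A y⟫)
    (hny : LinearMap.adjoint A y ≠ 0) (hby : ⟪b, y⟫ ≤ 0) :
    ⟪b, y⟫ = 0 ∧ ∀ x ∈ K, A x = b → x ∈ {z : E | ⟪LinearMap.adjoint A y, z⟫ = 0} ∩ K :=
  auxiliary_certificate_gives_face_general A K b hfeas y hdual hby
end
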